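/- If each formula perm_σ(C) := (⋀ᵢ₌₁^{2t} zᵢ = rep(σ)ᵢ) ∧ ⋀_{i∈I} a_{σ(i)} is a term, the encodings rep(σ) are distinct across σ ∈ P, and ψ^∨ is unambiguous, then the DNF ψ' = ⋁_{σ∈P} ⋁_{C term of ψ^∨} perm_σ(C) is unambiguous. -/

import Mathlib

/-- Satisfaction of a term of `ψ^∨` (positive/negative literal indicators over the
variables `v₁,…,v_{n'}`) by an assignment `β`. -/
def satTerm {n' : ℕ} (pos neg : Fin n' → Bool) (β : Fin n' → Bool) : Prop :=
  (∀ i, pos i = true → β i = true) ∧ (∀ i, neg i = true → β i = false)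

/-- Satisfaction of the term `perm_σ(C) = (⋀ᵢ zᵢ = rep(σ)ᵢ) ∧ σ(C)`, where
`C = ⋀_{i∈I} aᵢ` and `σ(C) = ⋀_{i∈I} a_{σ(i)}`, by an assignment `γ` to the
variables `z₁,…,z_{2t}` (type `Fin t2`) together with `v₁,…,v_{n'}`. -/
def satPermTerm {n' t2 : ℕ} (rep : Equiv.Perm (Fin n') → Fin t2 → Bool)
    (σ : Equiv.Perm (Fin n')) (pos neg : Fin n' → Bool)
    (γ : Fin t2 ⊕ Fin n' → Bool) : Prop :=
  (∀ z, γ (Sum.inl z) = rep σ z) ∧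
  (∀ i, pos i = true → γ (Sum.inr (σ i)) = true) ∧
  (∀ i, neg i = true → γ (Sum.inr (σ i)) = false)

section satPermTerm

variable {n' t2 : ℕ} {rep : Equiv.Perm (Fin n') → Fin t2 → Bool} {σ : Equiv.Perm (Fin n')}
  {pos neg : Fin n' → Bool} {γ : Fin t2 ⊕ Fin n' → Bool}

theorem satPermTerm.rep_eq (h : satPermTerm rep σ pos neg γ) :
    rep σ = fun z => γ (Sum.inl z) :=
  funext fun z => (h.1 z).symm

theorem satPermTerm.satTerm (h : satPermTerm rep σ pos neg γ) :
    satTerm pos neg fun i => γ (Sum.inr (σ i)) :=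
  h.2

end satPermTerm

/-- If the encodings `rep(σ)` are distinct across `σ ∈ P` and `ψ^∨` is
unambiguous, then the DNF `ψ' = ⋁_{σ∈P} ⋁_{C term of ψ^∨} perm_σ(C)` is unambiguous:
any assignment satisfies at most one of the terms `perm_σ(C)`. -/
theorem perm_extension_unambiguous
    (n' t2 ℓ : ℕ) (pos neg : Fin ℓ → Fin n' → Bool)
    (P : Finset (Equiv.Perm (Fin n')))
    (rep : Equiv.Perm (Fin n') → Fin t2 → Bool)
    (hrep : ∀ σ₁ ∈ P, ∀ σ₂ ∈ P, rep σ₁ = rep σ₂ → σ₁ = σ₂)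
    (hunamb : ∀ (β : Fin n' → Bool) (t₁ t₂ : Fin ℓ),
      satTerm (pos t₁) (neg t₁) β → satTerm (pos t₂) (neg t₂) β → t₁ = t₂) :
    ∀ (γ : Fin t2 ⊕ Fin n' → Bool) (σ₁ : Equiv.Perm (Fin n')) (_ : σ₁ ∈ P)
      (σ₂ : Equiv.Perm (Fin n')) (_ : σ₂ ∈ P) (t₁ t₂ : Fin ℓ),
      satPermTerm rep σ₁ (pos t₁) (neg t₁) γ →
      satPermTerm rep σ₂ (pos t₂) (neg t₂) γ →
      σ₁ = σ₂ ∧ t₁ = t₂ := by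
  intro γ σ₁ h₁ σ₂ h₂ t₁ t₂ hs₁ hs₂
  obtain rfl : σ₁ = σ₂ := hrep σ₁ h₁ σ₂ h₂ (hs₁.rep_eq.trans hs₂.rep_eq.symm)
  exact ⟨rfl, hunamb _ t₁ t₂ hs₁.satTerm hs₂.satTerm⟩
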